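/- Let R and S be strings over an alphabet Σ, let C be a cover of S with respect to R of size m, let 1 ≤ i ≤ |S| + 1, and let α be a character occurring in R. Then the string obtained from S by inserting the character α before position i has a cover with respect to R of size at most m + 2. -/

import Mathlib

/-- `sub R i j` is the substring `R[i..j]` of `R` (1-indexed, inclusive). -/
def sub {σ : Type*} (R : List σ) (i j : ℕ) : List σ := (R.drop (i - 1)).take (j - i + 1)

/-- The string of `R` referred to by a block `(i, j)`. -/
def blockStr {σ : Type*} (R : List σ) (b : ℕ × ℕ) : List σ := sub R b.1 b.2

/-- `C` is a cover (relative compression) of `S` with respect to `R`. -/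
def IsCover {σ : Type*} (R S : List σ) (C : List (ℕ × ℕ)) : Prop :=
  (∀ b ∈ C, 1 ≤ b.1 ∧ b.1 ≤ b.2 ∧ b.2 ≤ R.length) ∧
  S = (C.map (blockStr R)).flatten

/-- The character `α` occurs in `R`, i.e. `[α] = R[i..i]` for some `1 ≤ i ≤ |R|`. -/
def OccursIn {σ : Type*} (α : σ) (R : List σ) : Prop :=
  ∃ i, 1 ≤ i ∧ i ≤ R.length ∧ [α] = sub R i i

/-!
Split the cover at the insertion point: only the block straddling the split has to be cut,
into `R[p..p+k-1]` and `R[p+k..q]`, which costs one extra block. An occurrence `R[j..j]` of `α`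
is then placed between the two halves as a new block, for a second extra block.
-/

section

variable {σ : Type*} {R : List σ}

def IsBlock (R : List σ) (b : ℕ × ℕ) : Prop :=
  1 ≤ b.1 ∧ b.1 ≤ b.2 ∧ b.2 ≤ R.length

lemma sub_take (p q : ℕ) {k : ℕ} (hk₀ : 1 ≤ k) (hk : k ≤ q - p + 1) :
    (sub R p q).take k = sub R p (p + k - 1) := by
  simp only [sub, List.take_take]
  congr 1
  omega

lemma sub_drop {p : ℕ} (q : ℕ) {k : ℕ} (hp : 1 ≤ p) (hk : k ≤ q - p) :
    (sub R p q).drop k = sub R (p + k) q := by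
  simp only [sub, List.drop_take, List.drop_drop]
  congr 2 <;> omega

lemma IsBlock.length_blockStr {b : ℕ × ℕ} (hb : IsBlock R b) :
    (blockStr R b).length = b.2 - b.1 + 1 := by
  obtain ⟨h₁, h₁₂, h₂⟩ := hb
  simp only [blockStr, sub, List.length_take, List.length_drop]
  omega

lemma IsCover.nil : IsCover R [] [] :=
  ⟨by simp, rfl⟩

lemma IsCover.cons {S : List σ} {b : ℕ × ℕ} {C : List (ℕ × ℕ)} (hb : IsBlock R b)
    (hC : IsCover R S C) : IsCover R (blockStr R b ++ S) (b :: C) := by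
  obtain ⟨hv, rfl⟩ := hC
  exact ⟨List.forall_mem_cons.mpr ⟨hb, hv⟩, by simp⟩

lemma IsBlock.isCover_singleton {b : ℕ × ℕ} (hb : IsBlock R b) :
    IsCover R (blockStr R b) [b] := by
  simpa using IsCover.nil.cons hb

lemma IsCover.append {S T : List σ} {C D : List (ℕ × ℕ)} (hC : IsCover R S C)
    (hD : IsCover R T D) : IsCover R (S ++ T) (C ++ D) := by
  obtain ⟨hv, rfl⟩ := hC
  obtain ⟨hw, rfl⟩ := hD
  exact ⟨List.forall_mem_append.mpr ⟨hv, hw⟩, by simp⟩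

lemma IsBlock.isCover_take_drop {b : ℕ × ℕ} (hb : IsBlock R b) {k : ℕ} (hk₀ : 0 < k)
    (hk : k < (blockStr R b).length) :
    IsCover R ((blockStr R b).take k) [(b.1, b.1 + k - 1)] ∧
      IsCover R ((blockStr R b).drop k) [(b.1 + k, b.2)] := by
  rw [hb.length_blockStr] at hk
  obtain ⟨h₁, -, h₂⟩ := hb
  constructor
  · simpa [blockStr, sub_take b.1 b.2 hk₀ hk.le] using
      IsBlock.isCover_singleton (R := R) (b := (b.1, b.1 + k - 1)) ⟨h₁, by omega, by omega⟩
  · simpa [blockStr, sub_drop b.2 h₁ (Nat.le_sub_one_of_lt hk)] using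
      IsBlock.isCover_singleton (R := R) (b := (b.1 + k, b.2)) ⟨by omega, by omega, h₂⟩

theorem IsCover.exists_take_drop {S : List σ} {C : List (ℕ × ℕ)} (hC : IsCover R S C)
    (k : ℕ) :
    ∃ C₁ C₂, IsCover R (S.take k) C₁ ∧ IsCover R (S.drop k) C₂ ∧
      C₁.length + C₂.length ≤ C.length + 1 := by
  induction C generalizing S k with
  | nil =>
    obtain ⟨-, rfl⟩ := hC
    exact ⟨[], [], by simpa using IsCover.nil, by simpa using IsCover.nil, by simp⟩
  | cons b C ih =>
    obtain ⟨hv, rfl⟩ := hC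
    have hb : IsBlock R b := hv b List.mem_cons_self
    have hT : IsCover R (C.map (blockStr R)).flatten C :=
      ⟨fun x hx => hv x (List.mem_cons_of_mem _ hx), rfl⟩
    simp only [List.map_cons, List.flatten_cons]
    rcases Nat.eq_zero_or_pos k with rfl | hk₀
    · exact ⟨[], b :: C, by simpa using IsCover.nil, by simpa using hT.cons hb, by simp⟩
    rcases lt_or_ge k (blockStr R b).length with hk | hk
    · obtain ⟨h₁, h₂⟩ := hb.isCover_take_drop hk₀ hk
      refine ⟨[(b.1, b.1 + k - 1)], (b.1 + k, b.2) :: C, ?_, ?_, ?_⟩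
      · rwa [List.take_append_of_le_length hk.le]
      · rw [List.drop_append_of_le_length hk.le]
        exact h₂.append hT
      · simp only [List.length_cons, List.length_nil]
        omega
    · obtain ⟨C₁, C₂, h₁, h₂, hlen⟩ := ih hT (k - (blockStr R b).length)
      refine ⟨b :: C₁, C₂, ?_, ?_, by simp only [List.length_cons]; omega⟩
      · rw [List.take_append, List.take_of_length_le hk]
        exact h₁.cons hb
      · rwa [List.drop_append, List.drop_of_length_le hk, List.nil_append]

lemma OccursIn.exists_isCover {α : σ} (hα : OccursIn α R) : ∃ b, IsCover R [α] [b] := by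
  obtain ⟨j, hj₁, hj₂, hjα⟩ := hα
  exact ⟨(j, j), by simpa [blockStr, ← hjα] using
    IsBlock.isCover_singleton (R := R) (b := (j, j)) ⟨hj₁, le_rfl, hj₂⟩⟩

end

theorem insert_cover_general {σ : Type*} (R S : List σ) (C : List (ℕ × ℕ))
    (hC : IsCover R S C) (i : ℕ)
    (α : σ) (hα : OccursIn α R) :
    ∃ C' : List (ℕ × ℕ),
      IsCover R (S.take (i - 1) ++ [α] ++ S.drop (i - 1)) C' ∧
      C'.length ≤ C.length + 2 := by
  obtain ⟨C₁, C₂, h₁, h₂, hlen⟩ := hC.exists_take_drop (i - 1)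
  obtain ⟨b, hb⟩ := hα.exists_isCover
  refine ⟨C₁ ++ [b] ++ C₂, (h₁.append hb).append h₂, ?_⟩
  simp only [List.length_append, List.length_singleton]
  omega

/-- If `S` has a cover of size `m` w.r.t. `R`, `1 ≤ i ≤ |S| + 1`, and `α` occurs in `R`,
then the string obtained by inserting the character `α` before position `i` of `S` has
a cover of size at most `m + 2`. -/
theorem insert_cover {σ : Type*} (R S : List σ) (C : List (ℕ × ℕ))
    (hC : IsCover R S C) (i : ℕ) (hi1 : 1 ≤ i) (hi2 : i ≤ S.length + 1)
    (α : σ) (hα : OccursIn α R) :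
    ∃ C' : List (ℕ × ℕ),
      IsCover R (S.take (i - 1) ++ [α] ++ S.drop (i - 1)) C' ∧
      C'.length ≤ C.length + 2 :=
  insert_cover_general R S C hC i α hα
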